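/- A sub-root function has a unique positive fixed point: if ψ: [0,∞) → [0,∞) is non-negative, non-decreasing, not identically zero, continuous, and r ↦ ψ(r)/√r is non-increasing on (0,∞), then there exists a unique r* > 0 such that ψ(r*) = r*. -/
import Mathlib


/-- A sub-root function (non-negative, non-decreasing, not identically zero,
continuous on `[0,∞)`, with `r ↦ ψ r / √r` non-increasing on `(0,∞)`)
has a unique positive fixed point. -/
theorem subroot_unique_fixed_point (ψ : ℝ → ℝ)
    (hnonneg : ∀ r, 0 ≤ r → 0 ≤ ψ r)
    (hmono : MonotoneOn ψ (Set.Ici (0 : ℝ)))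
    (hnz : ∃ r, 0 ≤ r ∧ ψ r ≠ 0)
    (hcont : ContinuousOn ψ (Set.Ici (0 : ℝ)))
    (hsub : AntitoneOn (fun r => ψ r / Real.sqrt r) (Set.Ioi (0 : ℝ))) :
    ∃! r : ℝ, 0 < r ∧ ψ r = r := by
  -- uniqueness helper
  have uniq : ∀ a b : ℝ, 0 < a → ψ a = a → 0 < b → ψ b = b → a = b := by
    intro a b ha hfa hb hfb
    by_contra hne
    rcases lt_or_gt_of_ne hne with h | h
    · have := hsub (Set.mem_Ioi.2 ha) (Set.mem_Ioi.2 hb) h.le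
      simp only [hfa, hfb, Real.div_sqrt] at this
      exact absurd (Real.sqrt_lt_sqrt ha.le h) this.not_gt
    · have := hsub (Set.mem_Ioi.2 hb) (Set.mem_Ioi.2 ha) h.le
      simp only [hfa, hfb, Real.div_sqrt] at this
      exact absurd (Real.sqrt_lt_sqrt hb.le h) this.not_gt
  obtain ⟨r0, hr0, hψr0⟩ := hnz
  set r1 : ℝ := r0 + 1 with hr1def
  have hr1pos : 0 < r1 := by positivity
  have hψr1 : 0 < ψ r1 := by
    have h1 : ψ r0 ≤ ψ r1 := hmono hr0 (by positivity : (0:ℝ) ≤ r1) (by linarith)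
    have h2 : 0 < ψ r0 := lt_of_le_of_ne (hnonneg r0 hr0) (Ne.symm hψr0)
    linarith
  set c : ℝ := ψ r1 / Real.sqrt r1 with hcdef
  have hcpos : 0 < c := div_pos hψr1 (Real.sqrt_pos.2 hr1pos)
  -- small point
  set s : ℝ := min r1 (c ^ 2) / 2 with hsdef
  have hspos : 0 < s := by positivity
  have hs_lt_r1 : s ≤ r1 := by
    have := min_le_left r1 (c ^ 2); simp only [hsdef]; linarith
  have hs_lt_c2 : s < c ^ 2 := by
    have h1 := min_le_right r1 (c ^ 2)
    have : 0 < min r1 (c ^ 2) := lt_min hr1pos (by positivity)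
    simp only [hsdef]; linarith
  have hψs : s < ψ s := by
    have h1 : c ≤ ψ s / Real.sqrt s := hsub (Set.mem_Ioi.2 hspos) (Set.mem_Ioi.2 hr1pos) hs_lt_r1
    have hsq : Real.sqrt s < c := by
      have := Real.sqrt_lt_sqrt hspos.le hs_lt_c2
      rwa [Real.sqrt_sq hcpos.le] at this
    have h2 : c * Real.sqrt s ≤ ψ s := by
      exact (le_div_iff₀ (Real.sqrt_pos.2 hspos)).mp h1
    have h3 : s < c * Real.sqrt s := by
      have : Real.sqrt s * Real.sqrt s = s := Real.mul_self_sqrt hspos.le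
      nlinarith [Real.sqrt_pos.2 hspos]
    linarith
  -- large point
  set R : ℝ := max r1 (c ^ 2) + 1 with hRdef
  have hRpos : 0 < R := by positivity
  have hr1R : r1 ≤ R := by have := le_max_left r1 (c ^ 2); simp only [hRdef]; linarith
  have hc2R : c ^ 2 < R := by have := le_max_right r1 (c ^ 2); simp only [hRdef]; linarith
  have hψR : ψ R < R := by
    have h1 : ψ R / Real.sqrt R ≤ c := hsub (Set.mem_Ioi.2 hr1pos) (Set.mem_Ioi.2 hRpos) hr1R
    have hsq : c < Real.sqrt R := by
      have := Real.sqrt_lt_sqrt (by positivity : (0:ℝ) ≤ c ^ 2) hc2R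
      rwa [Real.sqrt_sq hcpos.le] at this
    have h2 : ψ R ≤ c * Real.sqrt R := by
      rw [div_le_iff₀ (Real.sqrt_pos.2 hRpos)] at h1
      linarith
    have h3 : c * Real.sqrt R < R := by
      have : Real.sqrt R * Real.sqrt R = R := Real.mul_self_sqrt hRpos.le
      nlinarith [Real.sqrt_pos.2 hRpos]
    linarith
  have hsR : s ≤ R := by linarith [hs_lt_r1, hr1R]
  -- IVT on f = ψ - id
  have hcont' : ContinuousOn (fun r => ψ r - r) (Set.Icc s R) :=
    (hcont.mono (fun x hx => le_trans hspos.le hx.1)).sub continuousOn_id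
  have key : (0 : ℝ) ∈ (fun r => ψ r - r) '' Set.Icc s R := by
    apply intermediate_value_Icc' hsR hcont'
    constructor
    · simpa using hψR.le
    · simpa using hψs.le
  obtain ⟨r, hrmem, hr⟩ := key
  have hrpos : 0 < r := lt_of_lt_of_le hspos hrmem.1
  have hfix : ψ r = r := by linarith [hr, sub_eq_zero.mp hr]
  exact ⟨r, ⟨hrpos, hfix⟩, fun y hy => uniq y r hy.1 hy.2 hrpos hfix⟩
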